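/- arXiv:2009.06236 — 2 statements merged into one kernel-verified Lean document; each statement's English description precedes it below -/
import Mathlib

section
/- Let A ∈ ℝ^{n×n} have a simple eigenvalue 1 with eigenvector ξ, C ∈ ℝ^{1×n} with rank([A − I; C]) = n, B ∈ ℝ^{n×p}, and suppose the (n+1)×(n+p) matrix [[A − I, B],[C, 0]] has full row rank n+1. Let S = [[1,h],[0,1]], Q = [Q¹, Q²] ∈ ℝ^{1×2} with Q¹ ≠ 0. Then there exist Π = [Π¹, Π²] ∈ ℝ^{n×2} with Π ≠ 0 and Γ = [Γ¹, Γ²] ∈ ℝ^{p×2} with Γ¹ = 0 such that A·Π − Π·S = −B·Γ and C·Π = Q. -/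
/-!
The first column of the regulator equations asks for `Π¹ ∈ ker (A - 1)` with `C Π¹ = Q¹` and
`Γ¹ = 0`. Since `[A - 1; C]` has full column rank, `C` does not vanish on the eigenvector `ξ`, so a
multiple of `ξ` does. The second column, `(A - 1) Π² + B Γ² = h Π¹`, `C Π² = Q²`, is solvable
because `[[A - 1, B], [C, 0]]` has full row rank. Finally `Π ≠ 0` because `C Π = Q ≠ 0`.
-/

open Matrix

namespace Matrix

section Field

variable {K : Type*} [Field K] {m n : Type*} [Fintype n]

theorem mulVec_injective_of_rank_eq_card (M : Matrix m n K) (hM : M.rank = Fintype.card n) :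
    Function.Injective M.mulVec := by
  have hker := LinearMap.finrank_range_add_finrank_ker M.mulVecLin
  rw [← rank, hM, Module.finrank_fintype_fun_eq_card, add_eq_left,
    Submodule.finrank_eq_zero] at hker
  exact LinearMap.ker_eq_bot.mp hker

theorem mulVec_surjective_of_rank_eq_card [Fintype m] (M : Matrix m n K)
    (hM : M.rank = Fintype.card m) : Function.Surjective M.mulVec := by
  have hrange : LinearMap.range M.mulVecLin = ⊤ := by
    apply Submodule.eq_top_of_finrank_eq
    rw [← rank, hM, Module.finrank_fintype_fun_eq_card]
  exact LinearMap.range_eq_top.mp hrange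

theorem exists_smul_mulVec_eq (C : Matrix (Fin 1) n K) {ξ : n → K} (hCξ : C *ᵥ ξ ≠ 0)
    (q : Fin 1 → K) : ∃ c : K, C *ᵥ (c • ξ) = q := by
  have hCξ₀ : (C *ᵥ ξ) 0 ≠ 0 := fun h₀ ↦ hCξ (funext fun i ↦ by rwa [Subsingleton.elim i 0])
  refine ⟨q 0 / (C *ᵥ ξ) 0, funext fun i ↦ ?_⟩
  rw [Subsingleton.elim i 0, mulVec_smul, Pi.smul_apply, smul_eq_mul, div_mul_cancel₀ _ hCξ₀]

end Field

variable {R : Type*} [CommRing R] {m₁ m₂ n₁ n₂ : Type*} [Fintype n₁] [Fintype n₂]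

theorem mulVec_ne_zero_of_fromRows_injective {P : Matrix m₁ n₁ R} {C : Matrix m₂ n₁ R}
    (hPC : Function.Injective (fromRows P C).mulVec) {x : n₁ → R} (hx : x ≠ 0)
    (hPx : P *ᵥ x = 0) : C *ᵥ x ≠ 0 := by
  intro hCx
  refine hx (hPC ?_)
  rw [fromRows_mulVec, hPx, hCx, mulVec_zero, Sum.elim_zero_zero]

theorem exists_mulVec_of_fromBlocks_surjective {P : Matrix m₁ n₁ R} {B : Matrix m₁ n₂ R}
    {C : Matrix m₂ n₁ R} {D : Matrix m₂ n₂ R} (hM : Function.Surjective (fromBlocks P B C D).mulVec)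
    (y : m₁ → R) (z : m₂ → R) :
    ∃ u v, P *ᵥ u + B *ᵥ v = y ∧ C *ᵥ u + D *ᵥ v = z := by
  obtain ⟨w, hw⟩ := hM (Sum.elim y z)
  rw [← Sum.elim_comp_inl_inr w, fromBlocks_mulVec, Sum.elim_eq_iff] at hw
  exact ⟨_, _, hw⟩

end Matrix

section Regulator

variable {R : Type*} [CommRing R] {m n p : Type*} [Fintype n] [Fintype p]

theorem sylvester_shift_of_columns [DecidableEq n] (A : Matrix n n R) (B : Matrix n p R) (h : R)
    {x y : n → R} {g : p → R} (hx : (A - 1) *ᵥ x = 0) (hy : (A - 1) *ᵥ y + B *ᵥ g = h • x) :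
    A * (of ![x, y])ᵀ - (of ![x, y])ᵀ * !![1, h; 0, 1] = -(B * (of ![0, g])ᵀ) := by
  rw [sub_mulVec, one_mulVec] at hx hy
  ext i j
  fin_cases j
  · simpa [mul_apply, mulVec, dotProduct] using congrFun hx i
  · have hyi := congrFun hy i
    simp [mul_apply, mulVec, dotProduct] at hyi ⊢
    linear_combination hyi

theorem mul_of_columns_eq (C : Matrix m n R) (Q : Matrix m (Fin 2) R) {x y : n → R}
    (hx : C *ᵥ x = Qᵀ 0) (hy : C *ᵥ y = Qᵀ 1) : C * (of ![x, y])ᵀ = Q := by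
  ext i j
  fin_cases j
  · simpa [mul_apply, mulVec, dotProduct] using congrFun hx i
  · simpa [mul_apply, mulVec, dotProduct] using congrFun hy i

end Regulator

theorem regulator_solution_with_zero_first_column_general (n p : ℕ) (h : ℝ)
    (A : Matrix (Fin n) (Fin n) ℝ) (B : Matrix (Fin n) (Fin p) ℝ)
    (C : Matrix (Fin 1) (Fin n) ℝ)
    (ξ : Fin n → ℝ) (hξ : ξ ≠ 0) (heig : A *ᵥ ξ = ξ)
    (hPBH : (Matrix.fromRows (A - 1) C).rank = n)
    (hfull : (Matrix.fromBlocks (A - 1) B C 0).rank = n + 1)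
    (S : Matrix (Fin 2) (Fin 2) ℝ) (hS : S = !![1, h; 0, 1])
    (Q : Matrix (Fin 1) (Fin 2) ℝ) (hQ : Q 0 0 ≠ 0) :
    ∃ (Pmat : Matrix (Fin n) (Fin 2) ℝ) (Γ : Matrix (Fin p) (Fin 2) ℝ),
      Pmat ≠ 0 ∧ (∀ i, Γ i 0 = 0) ∧ A * Pmat - Pmat * S = -(B * Γ) ∧ C * Pmat = Q := by
  have hξker : (A - 1) *ᵥ ξ = 0 := by rw [sub_mulVec, heig, one_mulVec, sub_self]
  have hCξ : C *ᵥ ξ ≠ 0 := mulVec_ne_zero_of_fromRows_injective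
    (mulVec_injective_of_rank_eq_card _ (by simpa using hPBH)) hξ hξker
  obtain ⟨c, hCπ₁⟩ := exists_smul_mulVec_eq C hCξ (Qᵀ 0)
  obtain ⟨π₂, γ₂, hπ₂, hCπ₂⟩ := exists_mulVec_of_fromBlocks_surjective
    (mulVec_surjective_of_rank_eq_card _ (by simpa using hfull)) (h • c • ξ) (Qᵀ 1)
  have hCP := mul_of_columns_eq C Q hCπ₁ (by rwa [zero_mulVec, add_zero] at hCπ₂)
  refine ⟨(of ![c • ξ, π₂])ᵀ, (of ![0, γ₂])ᵀ, ?_, fun _ ↦ rfl, ?_, hCP⟩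
  · intro hP
    exact hQ (by rw [← hCP, hP, Matrix.mul_zero, Matrix.zero_apply])
  · rw [hS]
    exact sylvester_shift_of_columns A B h (by rw [mulVec_smul, hξker, smul_zero]) hπ₂

theorem regulator_solution_with_zero_first_column (n p : ℕ) (h : ℝ) (hh : 0 < h)
    (A : Matrix (Fin n) (Fin n) ℝ) (B : Matrix (Fin n) (Fin p) ℝ)
    (C : Matrix (Fin 1) (Fin n) ℝ)
    (ξ : Fin n → ℝ) (hξ : ξ ≠ 0) (heig : A *ᵥ ξ = ξ)
    (hPBH : (Matrix.fromRows (A - 1) C).rank = n)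
    (hfull : (Matrix.fromBlocks (A - 1) B C 0).rank = n + 1)
    (S : Matrix (Fin 2) (Fin 2) ℝ) (hS : S = !![1, h; 0, 1])
    (Q : Matrix (Fin 1) (Fin 2) ℝ) (hQ : Q 0 0 ≠ 0) :
    ∃ (Pmat : Matrix (Fin n) (Fin 2) ℝ) (Γ : Matrix (Fin p) (Fin 2) ℝ),
      Pmat ≠ 0 ∧ (∀ i, Γ i 0 = 0) ∧ A * Pmat - Pmat * S = -(B * Γ) ∧ C * Pmat = Q :=
  regulator_solution_with_zero_first_column_general n p h A B C ξ hξ heig hPBH hfull S hS Q hQ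
end

section
/- Let Õ∞ = {(x̃, ω²) : H̃_x x̃ + H̃_w ω² ≤ 1} be invariant for the dynamics x̃⁺ = (A+BK)x̃, (ω²)⁺ = ω², i.e., (x̃, ω²) ∈ Õ∞ implies ((A+BK)x̃, ω²) ∈ Õ∞. Define 𝒪∞ = {(x,ω) : H̃_x(x − Πω) + H̃_w ω² ≤ 1} with Π satisfying AΠ − ΠS = −BΓ, L = Γ − KΠ. Then (x,ω) ∈ 𝒪∞ implies ((A+BK)x + BLω, Sω) ∈ 𝒪∞. -/
/-!
The change of coordinates `x̃ = x - Π ω` turns the coupled dynamics into the decoupled ones: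
the regulator equation makes `Π` intertwine the closed loop with the exosystem,
`(A + B K) Π + B L = Π S`, so `x̃⁺ = (A + B K) x̃`, and the shear `S` leaves `ω₂` fixed.
-/

open Matrix

section Intertwining

variable {R : Type*} [Ring R] {m n k : Type*} [Fintype m] [Fintype n] [Fintype k]

theorem closedLoop_mul_add_eq_of_regulator {A : Matrix n n R} {B : Matrix n k R}
    {K : Matrix k n R} {P : Matrix n m R} {Γ : Matrix k m R} {S : Matrix m m R}
    (hreg : A * P - P * S = -(B * Γ)) :
    (A + B * K) * P + B * (Γ - K * P) = P * S := by
  rw [Matrix.add_mul, Matrix.mul_sub, Matrix.mul_assoc, ← sub_eq_zero]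
  calc A * P + B * (K * P) + (B * Γ - B * (K * P)) - P * S
      = (A * P - P * S) + B * Γ := by abel
    _ = 0 := by rw [hreg, neg_add_cancel]

theorem mulVec_add_sub_mulVec_eq_of_intertwining {M : Matrix n n R} {N : Matrix n m R}
    {P : Matrix n m R} {S : Matrix m m R} (hMS : M * P + N = P * S) (x : n → R) (ω : m → R) :
    (M *ᵥ x + N *ᵥ ω) - P *ᵥ (S *ᵥ ω) = M *ᵥ (x - P *ᵥ ω) := by
  rw [mulVec_mulVec, ← hMS, add_mulVec, ← mulVec_mulVec, mulVec_sub]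
  abel

end Intertwining

theorem shear_mulVec_one {R : Type*} [Ring R] (h : R) (ω : Fin 2 → R) :
    (!![1, h; 0, 1] *ᵥ ω) 1 = ω 1 := by
  simp [mulVec, dotProduct, Fin.sum_univ_two]

theorem Oinf_invariance_general (n p ℓ : ℕ) (h : ℝ)
    (A : Matrix (Fin n) (Fin n) ℝ) (B : Matrix (Fin n) (Fin p) ℝ)
    (K : Matrix (Fin p) (Fin n) ℝ) (Pmat : Matrix (Fin n) (Fin 2) ℝ)
    (Γ : Matrix (Fin p) (Fin 2) ℝ)
    (S : Matrix (Fin 2) (Fin 2) ℝ) (hS : S = !![1, h; 0, 1])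
    (L : Matrix (Fin p) (Fin 2) ℝ)
    (hreg : A * Pmat - Pmat * S = -(B * Γ)) (hL : L = Γ - K * Pmat)
    (Htx : Matrix (Fin ℓ) (Fin n) ℝ) (Htw : Fin ℓ → ℝ)
    (hinv : ∀ (xt : Fin n → ℝ) (w2 : ℝ),
      (∀ i, (Htx *ᵥ xt) i + Htw i * w2 ≤ 1) →
      (∀ i, (Htx *ᵥ ((A + B * K) *ᵥ xt)) i + Htw i * w2 ≤ 1)) :
    ∀ (x : Fin n → ℝ) (ω : Fin 2 → ℝ),
      (∀ i, (Htx *ᵥ (x - Pmat *ᵥ ω)) i + Htw i * ω 1 ≤ 1) →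
      (∀ i, (Htx *ᵥ (((A + B * K) *ᵥ x + (B * L) *ᵥ ω) - Pmat *ᵥ (S *ᵥ ω))) i
          + Htw i * (S *ᵥ ω) 1 ≤ 1) := by
  intro x ω hx
  have hMS : (A + B * K) * Pmat + B * L = Pmat * S := by
    rw [hL]; exact closedLoop_mul_add_eq_of_regulator hreg
  rw [mulVec_add_sub_mulVec_eq_of_intertwining hMS, hS, shear_mulVec_one]
  exact hinv _ _ hx

theorem Oinf_invariance (n p ℓ : ℕ) (h : ℝ) (hh : 0 < h)
    (A : Matrix (Fin n) (Fin n) ℝ) (B : Matrix (Fin n) (Fin p) ℝ)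
    (K : Matrix (Fin p) (Fin n) ℝ) (Pmat : Matrix (Fin n) (Fin 2) ℝ)
    (Γ : Matrix (Fin p) (Fin 2) ℝ)
    (S : Matrix (Fin 2) (Fin 2) ℝ) (hS : S = !![1, h; 0, 1])
    (L : Matrix (Fin p) (Fin 2) ℝ)
    (hreg : A * Pmat - Pmat * S = -(B * Γ)) (hL : L = Γ - K * Pmat)
    (Htx : Matrix (Fin ℓ) (Fin n) ℝ) (Htw : Fin ℓ → ℝ)
    (hinv : ∀ (xt : Fin n → ℝ) (w2 : ℝ),
      (∀ i, (Htx *ᵥ xt) i + Htw i * w2 ≤ 1) →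
      (∀ i, (Htx *ᵥ ((A + B * K) *ᵥ xt)) i + Htw i * w2 ≤ 1)) :
    ∀ (x : Fin n → ℝ) (ω : Fin 2 → ℝ),
      (∀ i, (Htx *ᵥ (x - Pmat *ᵥ ω)) i + Htw i * ω 1 ≤ 1) →
      (∀ i, (Htx *ᵥ (((A + B * K) *ᵥ x + (B * L) *ᵥ ω) - Pmat *ᵥ (S *ᵥ ω))) i
          + Htw i * (S *ᵥ ω) 1 ≤ 1) :=
  Oinf_invariance_general n p ℓ h A B K Pmat Γ S hS L hreg hL Htx Htw hinv
end
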